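/- Suppose a sequent A₁, …, A_k, F_Γ, !F_Δ ⊢ B₁, …, B_m is derivable in classical propositional linear logic, where each Aᵢ and Bⱼ is built from the constant ⊥ by ⊗ and ⊸ (one Aᵢ may be of the form E_{Y₁} ⊕ E_{Y₂}), Γ and Δ are multisets of normalized formulas and F denotes the ⊥-only encoding. Then Σᵢ #⊥(Aᵢ) ≡ 1 − m + Σⱼ #⊥(Bⱼ) (mod 9N). In particular, if m = 0 then Σᵢ #⊥(Aᵢ) ≡ 1 (mod 9N). -/

import Mathlib

/-- Formulas of propositional linear logic. -/
inductive LF where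
  | lit : ℕ → LF
  | bot : LF
  | one : LF
  | tensor : LF → LF → LF
  | par : LF → LF → LF
  | limp : LF → LF → LF
  | witha : LF → LF → LF
  | oplus : LF → LF → LF
  | bang : LF → LF
deriving DecidableEq

open LF

/-- n-fold tensor power, `A^0 = 1`, `A^1 = A`. -/
def tpow (A : LF) : ℕ → LF
  | 0 => one
  | 1 => A
  | n+2 => tensor A (tpow A (n+1))

/-- n-fold par power, `A^[0] = ⊥`, `A^[1] = A`. -/
def ppow (A : LF) : ℕ → LF
  | 0 => bot
  | 1 => A
  | n+2 => par A (ppow A (n+1))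

/-- Curried implication `A^⟨n⟩ ⊸ B`. -/
def cimp : ℕ → LF → LF → LF
  | 0, _, B => B
  | n+1, A, B => limp A (cimp n A B)

/-- Tensor product of a list of positive literals (a simple product). -/
def llprod : List LF → LF
  | [] => one
  | [A] => A
  | A :: B :: l => tensor A (llprod (B :: l))

/-- Simple product of literals given by their indices. -/
def sprod (X : List ℕ) : LF := llprod (X.map lit)

/-- The bottom-count `#⊥`. -/
def botCount : LF → ℤ
  | lit _ => 0
  | bot => 1
  | one => 0
  | tensor A B => botCount A + botCount B
  | par A B => botCount A + botCount B - 1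
  | limp A B => botCount B - botCount A
  | witha A B => min (botCount A) (botCount B)
  | oplus A B => max (botCount A) (botCount B)
  | bang A => botCount A

/-- Normalized formulas: Horn, ⊕-Horn, &-Horn, and elementary embedded
implications over simple products (lists of literal indices). -/
inductive NF where
  | horn : List ℕ → List ℕ → NF
  | ohorn : List ℕ → List ℕ → List ℕ → NF
  | whorn : List ℕ → List ℕ → List ℕ → List ℕ → NF
  | embed : List ℕ → List ℕ → List ℕ → NF
deriving DecidableEq

/-- All simple products occurring in a normalized formula are nonempty. -/
def NF.ok : NF → Prop
  | .horn X Y => X ≠ [] ∧ Y ≠ []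
  | .ohorn X Y₁ Y₂ => X ≠ [] ∧ Y₁ ≠ [] ∧ Y₂ ≠ []
  | .whorn X₁ Y₁ X₂ Y₂ => X₁ ≠ [] ∧ Y₁ ≠ [] ∧ X₂ ≠ [] ∧ Y₂ ≠ []
  | .embed U V Y => U ≠ [] ∧ V ≠ [] ∧ Y ≠ []

/-- The linear-logic formula denoted by a normalized formula. -/
def nfF : NF → LF
  | .horn X Y => limp (sprod X) (sprod Y)
  | .ohorn X Y₁ Y₂ => limp (sprod X) (oplus (sprod Y₁) (sprod Y₂))
  | .whorn X₁ Y₁ X₂ Y₂ => witha (limp (sprod X₁) (sprod Y₁)) (limp (sprod X₂) (sprod Y₂))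
  | .embed U V Y => limp (limp (sprod U) (sprod V)) (sprod Y)

/-! ⊥-only basic formulas -/

def H00 (N : ℕ) : LF := limp (tpow bot (N+2)) (tpow bot 2)
def C00 (N : ℕ) : LF := limp (limp (tpow (H00 N) 2) (tpow bot 3)) (tpow bot 3)
def H1 (N : ℕ) : LF := limp (tpow (C00 N) 4) (tpow bot N)

/-- `D_{p_m} = ((H₁ ⊸ ⊥^{m+4}) ⊸ ⊥^{m+4})`. -/
def Dl (N m : ℕ) : LF := limp (limp (H1 N) (tpow bot (m+4))) (tpow bot (m+4))

/-- `D_X`, the tensor product of `D_q` over the literals of a simple product `X`. -/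
def DX (N : ℕ) : List ℕ → LF
  | [] => one
  | [q] => Dl N q
  | q :: r :: l => tensor (Dl N q) (DX N (r :: l))

/-- `E_X = C₀₀^6 ⊗ D_X`. -/
def EX (N : ℕ) (X : List ℕ) : LF := tensor (tpow (C00 N) 6) (DX N X)

/-- The ⊥-only encoding `F_A` of a normalized formula `A`
(`p` is the distinguished leading literal). -/
def Fenc (N p : ℕ) : NF → LF
  | .horn X Y => limp (EX N (p :: X)) (EX N (p :: Y))
  | .ohorn X Y₁ Y₂ => limp (EX N (p :: X)) (oplus (EX N (p :: Y₁)) (EX N (p :: Y₂)))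
  | .whorn X₁ Y₁ X₂ Y₂ =>
      witha (limp (EX N (p :: X₁)) (EX N (p :: Y₁))) (limp (EX N (p :: X₂)) (EX N (p :: Y₂)))
  | .embed U V Y =>
      limp (limp (EX N (p :: U)) (EX N (p :: V))) (limp (EX N [p]) (EX N (p :: Y)))

/-! One-literal basic formulas (with leading literal `p`). -/

def H0t (N p : ℕ) : LF := cimp (N+2) (lit p) (tpow (lit p) 2)
def C0t (N p : ℕ) : LF := limp (cimp 2 (H0t N p) (tpow (lit p) 3)) (tpow (lit p) 3)
def H1t (N p : ℕ) : LF := cimp 4 (C0t N p) (tpow (lit p) N)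
def Dt (N p m : ℕ) : LF :=
  limp (limp (H1t N p) (tpow (lit p) (m+4))) (tpow (lit p) (m+4))

def Gt (N p : ℕ) : List ℕ → LF
  | [] => lit p
  | q :: l => limp (Dt N p q) (Gt N p l)

def Et (N p : ℕ) (X : List ℕ) : LF := cimp 6 (C0t N p) (Gt N p X)

/-- The one-literal encoding `F̃_A(p)`. -/
def Ften (N p : ℕ) : NF → LF
  | .horn X Y => limp (Et N p (p :: Y)) (Et N p (p :: X))
  | .ohorn X Y₁ Y₂ =>
      limp (witha (Et N p (p :: Y₁)) (Et N p (p :: Y₂))) (Et N p (p :: X))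
  | .whorn X₁ Y₁ X₂ Y₂ =>
      witha (limp (Et N p (p :: Y₁)) (Et N p (p :: X₁)))
            (limp (Et N p (p :: Y₂)) (Et N p (p :: X₂)))
  | .embed U V Y =>
      limp (limp (limp (Et N p (p :: Y)) (Et N p [p])) (lit p))
           (limp (limp (Et N p (p :: V)) (Et N p (p :: U))) (lit p))

/-- Substitution of `⊥` for the literal `p`. -/
def subB (p : ℕ) : LF → LF
  | lit q => if q = p then bot else lit q
  | bot => bot
  | one => one
  | tensor A B => tensor (subB p A) (subB p B)
  | par A B => par (subB p A) (subB p B)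
  | limp A B => limp (subB p A) (subB p B)
  | witha A B => witha (subB p A) (subB p B)
  | oplus A B => oplus (subB p A) (subB p B)
  | bang A => bang (subB p A)

/-! Unit-only basic formulas. -/

def H01 (N : ℕ) : LF := limp (ppow one 2) (ppow one (N+2))
def C01 (N : ℕ) : LF := limp (ppow one 3) (tensor (ppow one 3) (tensor (H01 N) (H01 N)))

def Gl (N m : ℕ) : LF :=
  tensor (ppow one (m+4)) (limp (ppow one (m+4)) (tensor (ppow one N) (tpow (C01 N) 4)))

def GX (N : ℕ) : List ℕ → LF
  | [] => bot
  | [q] => Gl N q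
  | q :: r :: l => par (Gl N q) (GX N (r :: l))

def E1 (N : ℕ) (X : List ℕ) : LF := limp (tpow (C01 N) 6) (GX N X)

/-- The unit-only encoding `F¹_A`. -/
def F1enc (N p : ℕ) : NF → LF
  | .horn X Y => limp (E1 N (p :: Y)) (E1 N (p :: X))
  | .ohorn X Y₁ Y₂ =>
      limp (witha (E1 N (p :: Y₁)) (E1 N (p :: Y₂))) (E1 N (p :: X))
  | .whorn X₁ Y₁ X₂ Y₂ =>
      witha (limp (E1 N (p :: Y₁)) (E1 N (p :: X₁)))
            (limp (E1 N (p :: Y₂)) (E1 N (p :: X₂)))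
  | .embed U V Y =>
      limp (limp (E1 N (p :: V)) (E1 N (p :: U)))
           (limp (E1 N (p :: Y)) (E1 N [p]))

/-- Two-sided sequent calculus for classical propositional linear logic
(Table 1 of the paper); contexts are multisets, so exchange is implicit. -/
inductive Derives : Multiset LF → Multiset LF → Prop where
  | id (A : LF) : Derives {A} {A}
  | limpL {S1 S2 T1 T2 : Multiset LF} {A B : LF} :
      Derives S1 (A ::ₘ T1) → Derives (B ::ₘ S2) T2 →
      Derives (limp A B ::ₘ (S1 + S2)) (T1 + T2)
  | limpR {S T : Multiset LF} {A B : LF} :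
      Derives (A ::ₘ S) (B ::ₘ T) → Derives S (limp A B ::ₘ T)
  | tensorL {S T : Multiset LF} {A B : LF} :
      Derives (A ::ₘ B ::ₘ S) T → Derives (tensor A B ::ₘ S) T
  | tensorR {S1 S2 T1 T2 : Multiset LF} {A B : LF} :
      Derives S1 (A ::ₘ T1) → Derives S2 (B ::ₘ T2) →
      Derives (S1 + S2) (tensor A B ::ₘ (T1 + T2))
  | parL {S1 S2 T1 T2 : Multiset LF} {A B : LF} :
      Derives (A ::ₘ S1) T1 → Derives (B ::ₘ S2) T2 →
      Derives (par A B ::ₘ (S1 + S2)) (T1 + T2)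
  | parR {S T : Multiset LF} {A B : LF} :
      Derives S (A ::ₘ B ::ₘ T) → Derives S (par A B ::ₘ T)
  | oplusL {S T : Multiset LF} {A B : LF} :
      Derives (A ::ₘ S) T → Derives (B ::ₘ S) T → Derives (oplus A B ::ₘ S) T
  | oplusR1 {S T : Multiset LF} {A B : LF} :
      Derives S (A ::ₘ T) → Derives S (oplus A B ::ₘ T)
  | oplusR2 {S T : Multiset LF} {A B : LF} :
      Derives S (B ::ₘ T) → Derives S (oplus A B ::ₘ T)
  | withL1 {S T : Multiset LF} {A B : LF} :
      Derives (A ::ₘ S) T → Derives (witha A B ::ₘ S) T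
  | withL2 {S T : Multiset LF} {A B : LF} :
      Derives (B ::ₘ S) T → Derives (witha A B ::ₘ S) T
  | withR {S T : Multiset LF} {A B : LF} :
      Derives S (A ::ₘ T) → Derives S (B ::ₘ T) → Derives S (witha A B ::ₘ T)
  | bangL {S T : Multiset LF} {A : LF} :
      Derives (A ::ₘ S) T → Derives (bang A ::ₘ S) T
  | bangR {S : Multiset LF} {C : LF} :
      Derives (S.map bang) {C} → Derives (S.map bang) {bang C}
  | weakL {S T : Multiset LF} {A : LF} :
      Derives S T → Derives (bang A ::ₘ S) T
  | contrL {S T : Multiset LF} {A : LF} :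
      Derives (bang A ::ₘ bang A ::ₘ S) T → Derives (bang A ::ₘ S) T
  | botL : Derives {bot} 0
  | botR {S T : Multiset LF} : Derives S T → Derives S (bot ::ₘ T)
  | oneL {S T : Multiset LF} : Derives S T → Derives (one ::ₘ S) T
  | oneR : Derives 0 {one}

/-- Formulas built from the constant `⊥` by `⊗` and `⊸` only. -/
def MB : LF → Prop
  | .bot => True
  | .tensor A B => MB A ∧ MB B
  | .limp A B => MB A ∧ MB B
  | _ => False


/-!
Give a sequent `S ⊢ T` the weight `Σ_S #⊥ - Σ_T #⊥ + |T|`: the total count of the one-sided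
sequent `⊢ S^⊥, T`, as `#⊥(B^⊥) = 1 - #⊥(B)`. Axioms, `⊥ ⊢` and `⊢ 1` have weight `1`, the
multiplicative one-premise rules keep the weight, and `L⊸`, `R⊗`, `L⅋` give the sum of the weights
of their premises minus `1`. The additive rules and weakening/contraction of `!A` keep it modulo
`n` as soon as the two branches of each `⊕`/`&` have congruent counts and `#⊥(A) ≡ 0`. A cut-free
derivation only contains subformulas of its end sequent, so it is enough that the end sequent is
balanced in this sense. For `n = 9N` the encodings are: `#⊥(E_X) = -12N + 9N·|X| ≡ -12N` does not
depend on `X`, whence `#⊥(F_A) ≡ 0`.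
-/

theorem Multiset.forall_mem_add {α : Type*} {p : α → Prop} {s t : Multiset α} :
    (∀ x ∈ s + t, p x) ↔ (∀ x ∈ s, p x) ∧ ∀ x ∈ t, p x := by
  simp only [Multiset.mem_add, or_imp, forall_and]

theorem intCast_max_of_intCast_eq {R : Type*} [AddGroupWithOne R] {a b : ℤ}
    (h : (a : R) = b) : ((max a b : ℤ) : R) = a := by
  rcases max_choice a b with hm | hm <;> simp [hm, h]

theorem intCast_min_of_intCast_eq {R : Type*} [AddGroupWithOne R] {a b : ℤ}
    (h : (a : R) = b) : ((min a b : ℤ) : R) = a := by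
  rcases min_choice a b with hm | hm <;> simp [hm, h]

theorem intCast_multiset_sum_eq_zero {R : Type*} [AddCommGroupWithOne R] {s : Multiset ℤ}
    (h : ∀ x ∈ s, (x : R) = 0) : (s.sum : R) = 0 := by
  rw [Int.cast_multiset_sum]
  exact Multiset.sum_eq_zero (by simpa using h)

def BalancedMod (n : ℕ) : LF → Prop
  | .tensor A B | .par A B | .limp A B => BalancedMod n A ∧ BalancedMod n B
  | .witha A B | .oplus A B =>
      BalancedMod n A ∧ BalancedMod n B ∧ (botCount A : ZMod n) = botCount B
  | .bang A => BalancedMod n A ∧ (botCount A : ZMod n) = 0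
  | .lit _ | .bot | .one => True

def seqWeight (S T : Multiset LF) : ℤ :=
  (S.map botCount).sum - (T.map botCount).sum + Multiset.card T

@[simp] theorem seqWeight_zero : seqWeight 0 0 = 0 := by simp [seqWeight]

@[simp] theorem seqWeight_cons_left (A : LF) (S T : Multiset LF) :
    seqWeight (A ::ₘ S) T = botCount A + seqWeight S T := by
  simp [seqWeight]; ring

@[simp] theorem seqWeight_cons_right (B : LF) (S T : Multiset LF) :
    seqWeight S (B ::ₘ T) = 1 - botCount B + seqWeight S T := by
  simp [seqWeight]; ring

@[simp] theorem seqWeight_add (S₁ S₂ T₁ T₂ : Multiset LF) :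
    seqWeight (S₁ + S₂) (T₁ + T₂) = seqWeight S₁ T₁ + seqWeight S₂ T₂ := by
  simp [seqWeight]; ring

open Multiset in
theorem Derives.cast_seqWeight_eq_one {n : ℕ} {S T : Multiset LF} (h : Derives S T)
    (hS : ∀ A ∈ S, BalancedMod n A) (hT : ∀ B ∈ T, BalancedMod n B) :
    (seqWeight S T : ZMod n) = 1 := by
  induction h
  all_goals simp -failIfUnchanged only [← cons_zero, forall_mem_cons, forall_mem_add,
    notMem_zero, IsEmpty.forall_iff, implies_true, true_and, and_true, BalancedMod] at *
  all_goals simp -failIfUnchanged only [seqWeight_cons_left, seqWeight_cons_right,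
    seqWeight_add, seqWeight_zero, botCount, Int.cast_add, Int.cast_sub, Int.cast_one,
    Int.cast_zero] at *
  case id => ring
  case limpL ih₁ ih₂ =>
    obtain ⟨⟨hA, hB⟩, hS₁, hS₂⟩ := hS
    linear_combination ih₁ hS₁ ⟨hA, hT.1⟩ + ih₂ ⟨hB, hS₂⟩ hT.2
  case limpR ih =>
    obtain ⟨⟨hA, hB⟩, hT⟩ := hT
    linear_combination ih ⟨hA, hS⟩ ⟨hB, hT⟩
  case tensorL ih =>
    obtain ⟨⟨hA, hB⟩, hS⟩ := hS
    linear_combination ih ⟨hA, hB, hS⟩ hT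
  case tensorR ih₁ ih₂ =>
    obtain ⟨⟨hA, hB⟩, hT₁, hT₂⟩ := hT
    linear_combination ih₁ hS.1 ⟨hA, hT₁⟩ + ih₂ hS.2 ⟨hB, hT₂⟩
  case parL ih₁ ih₂ =>
    obtain ⟨⟨hA, hB⟩, hS₁, hS₂⟩ := hS
    linear_combination ih₁ ⟨hA, hS₁⟩ hT.1 + ih₂ ⟨hB, hS₂⟩ hT.2
  case parR ih =>
    obtain ⟨⟨hA, hB⟩, hT⟩ := hT
    linear_combination ih hS ⟨hA, hB, hT⟩
  case oplusL ih _ =>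
    obtain ⟨⟨hA, -, hAB⟩, hS⟩ := hS
    rw [intCast_max_of_intCast_eq hAB]
    exact ih ⟨hA, hS⟩ hT
  case oplusR1 ih =>
    obtain ⟨⟨hA, -, hAB⟩, hT⟩ := hT
    rw [intCast_max_of_intCast_eq hAB]
    exact ih hS ⟨hA, hT⟩
  case oplusR2 ih =>
    obtain ⟨⟨-, hB, hAB⟩, hT⟩ := hT
    rw [max_comm, intCast_max_of_intCast_eq hAB.symm]
    exact ih hS ⟨hB, hT⟩
  case withL1 ih =>
    obtain ⟨⟨hA, -, hAB⟩, hS⟩ := hS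
    rw [intCast_min_of_intCast_eq hAB]
    exact ih ⟨hA, hS⟩ hT
  case withL2 ih =>
    obtain ⟨⟨-, hB, hAB⟩, hS⟩ := hS
    rw [min_comm, intCast_min_of_intCast_eq hAB.symm]
    exact ih ⟨hB, hS⟩ hT
  case withR ih _ =>
    obtain ⟨⟨hA, -, hAB⟩, hT⟩ := hT
    rw [intCast_min_of_intCast_eq hAB]
    exact ih hS ⟨hA, hT⟩
  case bangL ih =>
    obtain ⟨⟨hA, -⟩, hS⟩ := hS
    exact ih ⟨hA, hS⟩ hT
  case bangR ih => exact ih hS hT.1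
  case weakL ih =>
    obtain ⟨⟨-, hA⟩, hS⟩ := hS
    linear_combination hA + ih hS hT
  case contrL ih =>
    obtain ⟨hA, hS⟩ := hS
    linear_combination ih ⟨hA, hA, hS⟩ hT - hA.2
  case botL => ring
  case botR ih => linear_combination ih hS hT
  case oneL ih => linear_combination ih hS hT
  case oneR => ring

theorem botCount_tpow (A : LF) : ∀ k, botCount (tpow A k) = k * botCount A
  | 0 => by simp [tpow, botCount]
  | 1 => by simp [tpow]
  | k + 2 => by
    simp only [tpow, botCount, botCount_tpow A (k + 1)]
    push_cast; ring

theorem botCount_C00 (N : ℕ) : botCount (C00 N) = -2 * N := by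
  simp [C00, H00, botCount, botCount_tpow]

theorem botCount_Dl (N m : ℕ) : botCount (Dl N m) = 9 * N := by
  simp [Dl, H1, botCount, botCount_tpow, botCount_C00]; ring

theorem botCount_DX (N : ℕ) : ∀ X, botCount (DX N X) = 9 * N * X.length
  | [] => by simp [DX, botCount]
  | [q] => by simp [DX, botCount_Dl]
  | q :: r :: X => by
    simp only [DX, botCount, botCount_Dl, botCount_DX N (r :: X), List.length_cons]
    push_cast; ring

theorem botCount_EX (N : ℕ) (X : List ℕ) : botCount (EX N X) = -12 * N + 9 * N * X.length := by
  simp [EX, botCount, botCount_tpow, botCount_C00, botCount_DX]; ring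

theorem cast_botCount_EX (N : ℕ) (X : List ℕ) :
    (botCount (EX N X) : ZMod (9 * N)) = -12 * N := by
  have h9N : ((9 * N : ℕ) : ZMod (9 * N)) = 0 := ZMod.natCast_self _
  push_cast [botCount_EX] at h9N ⊢
  linear_combination (X.length : ZMod (9 * N)) * h9N

theorem cast_botCount_EX_eq (N : ℕ) (X Y : List ℕ) :
    (botCount (EX N X) : ZMod (9 * N)) = botCount (EX N Y) := by
  rw [cast_botCount_EX, cast_botCount_EX]

theorem cast_botCount_Fenc (N p : ℕ) (A : NF) : (botCount (Fenc N p A) : ZMod (9 * N)) = 0 := by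
  cases A <;> simp only [Fenc, botCount, Int.cast_sub, cast_botCount_EX]
  case ohorn => rw [intCast_max_of_intCast_eq (cast_botCount_EX_eq ..), cast_botCount_EX]; ring
  case whorn =>
    rw [intCast_min_of_intCast_eq (by push_cast [cast_botCount_EX]; ring)]
    push_cast [cast_botCount_EX]; ring
  all_goals ring

section BalancedMod

variable {n : ℕ}

theorem balancedMod_tpow {A : LF} (k : ℕ) (hA : BalancedMod n A) : BalancedMod n (tpow A k) :=
  match k with
  | 0 => trivial
  | 1 => hA
  | k + 2 => ⟨hA, balancedMod_tpow (k + 1) hA⟩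

theorem balancedMod_tpow_bot (k : ℕ) : BalancedMod n (tpow bot k) :=
  balancedMod_tpow k trivial

theorem balancedMod_C00 (N : ℕ) : BalancedMod n (C00 N) :=
  ⟨⟨balancedMod_tpow 2 ⟨balancedMod_tpow_bot _, balancedMod_tpow_bot _⟩, balancedMod_tpow_bot 3⟩,
    balancedMod_tpow_bot 3⟩

theorem balancedMod_Dl (N m : ℕ) : BalancedMod n (Dl N m) :=
  ⟨⟨⟨balancedMod_tpow 4 (balancedMod_C00 N), balancedMod_tpow_bot N⟩, balancedMod_tpow_bot _⟩,
    balancedMod_tpow_bot _⟩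

theorem balancedMod_DX (N : ℕ) : ∀ X, BalancedMod n (DX N X)
  | [] => trivial
  | [m] => balancedMod_Dl N m
  | m :: r :: X => ⟨balancedMod_Dl N m, balancedMod_DX N (r :: X)⟩

theorem balancedMod_EX (N : ℕ) (X : List ℕ) : BalancedMod n (EX N X) :=
  ⟨balancedMod_tpow 6 (balancedMod_C00 N), balancedMod_DX N X⟩

theorem MB.balancedMod {A : LF} (hA : MB A) : BalancedMod n A := by
  induction A <;> simp_all [MB, BalancedMod]

end BalancedMod

theorem balancedMod_Fenc (N p : ℕ) (A : NF) : BalancedMod (9 * N) (Fenc N p A) := by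
  cases A <;> simp only [Fenc, BalancedMod, balancedMod_EX, botCount, Int.cast_sub,
    cast_botCount_EX, and_self]

theorem balancedMod_bang_Fenc (N p : ℕ) (A : NF) : BalancedMod (9 * N) (bang (Fenc N p A)) :=
  ⟨balancedMod_Fenc N p A, cast_botCount_Fenc N p A⟩

theorem balancedMod_oplus_EX (N : ℕ) (Y₁ Y₂ : List ℕ) :
    BalancedMod (9 * N) (oplus (EX N Y₁) (EX N Y₂)) :=
  ⟨balancedMod_EX N Y₁, balancedMod_EX N Y₂, cast_botCount_EX_eq N Y₁ Y₂⟩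

theorem stmt12_general (N : ℕ) (p : ℕ) (As Bs : List LF) (Γ Δ : Multiset NF)
    (hA : ∀ A ∈ As, MB A ∨ ∃ Y₁ Y₂ : List ℕ, A = LF.oplus (EX N Y₁) (EX N Y₂))
    (hB : ∀ B ∈ Bs, MB B)
    (h : Derives ((↑As : Multiset LF) + Γ.map (Fenc N p)
            + Δ.map (fun A => LF.bang (Fenc N p A))) (↑Bs : Multiset LF)) :
    (As.map botCount).sum ≡
      1 - (Bs.length : ℤ) + (Bs.map botCount).sum [ZMOD (9 * (N : ℤ))] := by
  have hS : ∀ A ∈ (↑As : Multiset LF) + Γ.map (Fenc N p)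
      + Δ.map (fun A => LF.bang (Fenc N p A)), BalancedMod (9 * N) A := by
    simp only [Multiset.forall_mem_add, Multiset.forall_mem_map_iff, Multiset.mem_coe]
    refine ⟨⟨fun A hA' => ?_, fun A _ => balancedMod_Fenc N p A⟩,
      fun A _ => balancedMod_bang_Fenc N p A⟩
    rcases hA A hA' with hMB | ⟨Y₁, Y₂, rfl⟩
    exacts [hMB.balancedMod, balancedMod_oplus_EX N Y₁ Y₂]
  have hw := h.cast_seqWeight_eq_one hS fun B hB' => (hB B hB').balancedMod
  have hΓ : (((Γ.map (Fenc N p)).map botCount).sum : ZMod (9 * N)) = 0 :=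
    intCast_multiset_sum_eq_zero (by simp [cast_botCount_Fenc])
  have hΔ : (((Δ.map fun A => LF.bang (Fenc N p A)).map botCount).sum : ZMod (9 * N)) = 0 :=
    intCast_multiset_sum_eq_zero (by simp [botCount, cast_botCount_Fenc])
  simp only [seqWeight, Multiset.map_add, Multiset.sum_add, Multiset.coe_card, Multiset.map_coe,
    Multiset.sum_coe, Int.cast_add, Int.cast_sub, Int.cast_natCast, hΓ, hΔ] at hw
  rw [show 9 * (N : ℤ) = (9 * N : ℕ) by push_cast; rfl, ← ZMod.intCast_eq_intCast_iff]
  simp only [Int.cast_add, Int.cast_sub, Int.cast_one, Int.cast_natCast]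
  linear_combination hw

/-- Lemma 5.0 / L1: if the sequent
`A₁, …, A_k, F_Γ, !F_Δ ⊢ B₁, …, B_m` is derivable in linear logic, where every
`Aᵢ` and `Bⱼ` is built from `⊥` by `⊗, ⊸` (an `Aᵢ` may also be of the form
`E_{Y₁} ⊕ E_{Y₂}`), and `Γ, Δ` are multisets of normalized formulas, then
`Σᵢ #⊥(Aᵢ) ≡ 1 − m + Σⱼ #⊥(Bⱼ) (mod 9N)` (so in particular
`Σᵢ #⊥(Aᵢ) ≡ 1 (mod 9N)` when `m = 0`). -/
theorem stmt12 (N : ℕ) (hN : 0 < N) (p : ℕ) (As Bs : List LF) (Γ Δ : Multiset NF)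
    (hA : ∀ A ∈ As, MB A ∨ ∃ Y₁ Y₂ : List ℕ, A = LF.oplus (EX N Y₁) (EX N Y₂))
    (hB : ∀ B ∈ Bs, MB B)
    (h : Derives ((↑As : Multiset LF) + Γ.map (Fenc N p)
            + Δ.map (fun A => LF.bang (Fenc N p A))) (↑Bs : Multiset LF)) :
    (As.map botCount).sum ≡
      1 - (Bs.length : ℤ) + (Bs.map botCount).sum [ZMOD (9 * (N : ℤ))] :=
  stmt12_general N p As Bs Γ Δ hA hB h
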